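/- Existence lemma: if X is a maximal consistent set with the ∀-property over a signature with infinitely many constants, then there exists a maximal consistent set Y with the ∀-property over the same signature such that {ψ : ⟨ā⟩ψ ∈ X} ⊆ Y. -/

import Mathlib

/-- Terms: variables or constants. -/
inductive Tm (C : Type) : Type
  | var : ℕ → Tm C
  | const : C → Tm C
deriving DecidableEq

/-- Formulas of first-order coalition logic over a signature ⟨n, C, Ap⟩. -/
inductive Form (n : ℕ) (C : Type) (Ap : Type) : Type
  | atom : Ap → Form n C Ap
  | neg : Form n C Ap → Form n C Ap
  | and : Form n C Ap → Form n C Ap → Form n C Ap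
  | box : (Fin n → Tm C) → Form n C Ap → Form n C Ap
  | all : ℕ → Form n C Ap → Form n C Ap

namespace Form

variable {n : ℕ} {C Ap : Type}

def imp (φ ψ : Form n C Ap) : Form n C Ap := .neg (.and φ (.neg ψ))
def iff (φ ψ : Form n C Ap) : Form n C Ap := .and (imp φ ψ) (imp ψ φ)
def ex (x : ℕ) (φ : Form n C Ap) : Form n C Ap := .neg (.all x (.neg φ))

open Classical in
/-- Substitution of a term for a variable. -/
noncomputable def substT (t : Tm C) (x : ℕ) : Form n C Ap → Form n C Ap
  | .atom p => .atom p
  | .neg φ => .neg (substT t x φ)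
  | .and φ ψ => .and (substT t x φ) (substT t x ψ)
  | .box ts φ => .box (fun i => if ts i = .var x then t else ts i) (substT t x φ)
  | .all y φ => if y = x then .all y φ else .all y (substT t x φ)

/-- Substitution of a constant for a variable. -/
noncomputable def subst (a : C) (x : ℕ) (φ : Form n C Ap) : Form n C Ap := substT (.const a) x φ

/-- Free variables. -/
def FV : Form n C Ap → Finset ℕ
  | .atom _ => ∅
  | .neg φ => FV φ
  | .and φ ψ => FV φ ∪ FV ψ
  | .box ts φ => FV φ ∪ Finset.univ.biUnion (fun i => match ts i with | Tm.var x => {x} | _ => ∅)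
  | .all y φ => FV φ \ {y}

/-- A sentence (closed formula). -/
def closed (φ : Form n C Ap) : Prop := FV φ = ∅

/-- Universal closure of a formula. -/
def closure (φ : Form n C Ap) : Form n C Ap := ((FV φ).sort (· ≤ ·)).foldr Form.all φ

def size : Form n C Ap → ℕ
  | .atom _ => 1
  | .neg φ => size φ + 1
  | .and φ ψ => size φ + size ψ + 1
  | .box _ φ => size φ + 1
  | .all _ φ => size φ + 1

theorem size_substT (t : Tm C) (x : ℕ) (φ : Form n C Ap) :
    size (substT t x φ) = size φ := by
  induction φ with
  | atom p => rfl
  | neg φ ih => simp [substT, size, ih]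
  | and φ ψ ih1 ih2 => simp [substT, size, ih1, ih2]
  | box ts φ ih => simp [substT, size, ih]
  | all y φ ih => by_cases h : y = x <;> simp [substT, size, h, ih]

/-- Whether a term occurs in a formula. -/
def occursT (t : Tm C) : Form n C Ap → Prop
  | .atom _ => False
  | .neg φ => occursT t φ
  | .and φ ψ => occursT t φ ∨ occursT t ψ
  | .box ts φ => (∃ i, ts i = t) ∨ occursT t φ
  | .all y φ => (t = Tm.var y) ∨ occursT t φ

end Form

/-- A concurrent game structure over a signature ⟨n, C, Ap⟩ (actions = constants). -/
structure CGS (n : ℕ) (C : Type) (Ap : Type) where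
  S : Type
  R : S → (Fin n → C) → S → Prop
  V : Ap → S → Prop

namespace CGS

variable {n : ℕ} {C Ap : Type}

def Serial (G : CGS n C Ap) : Prop := ∀ s d, ∃ t, G.R s d t

def Functional (G : CGS n C Ap) : Prop := ∀ s d t v, G.R s d t → G.R s d v → t = v

end CGS

/-- Satisfaction of (closed) formulas in a CGS. -/
def Sat {n : ℕ} {C Ap : Type} (G : CGS n C Ap) : G.S → Form n C Ap → Prop
  | s, .atom p => G.V p s
  | s, .neg φ => ¬ Sat G s φ
  | s, .and φ ψ => Sat G s φ ∧ Sat G s ψ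
  | s, .box ts φ => ∃ d : Fin n → C, (∀ i, ts i = Tm.const (d i)) ∧ ∃ t, G.R s d t ∧ Sat G t φ
  | s, .all x φ => ∀ a : C, Sat G s (Form.subst a x φ)
termination_by _ φ => Form.size φ
decreasing_by all_goals simp [Form.subst, Form.size_substT, Form.size] <;> omega

/-- Truth of a possibly open formula: truth of its universal closure. -/
def SatC {n : ℕ} {C Ap : Type} (G : CGS n C Ap) (s : G.S) (φ : Form n C Ap) : Prop :=
  Sat G s (Form.closure φ)

/-- Validity in a CGS. -/
def ValidIn {n : ℕ} {C Ap : Type} (G : CGS n C Ap) (φ : Form n C Ap) : Prop :=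
  ∀ s : G.S, SatC G s φ

/-- Propositional evaluation treating atoms, boxes and quantified formulas as atomic. -/
def evalP {n : ℕ} {C Ap : Type} (v : Form n C Ap → Prop) : Form n C Ap → Prop
  | .neg φ => ¬ evalP v φ
  | .and φ ψ => evalP v φ ∧ evalP v ψ
  | .atom p => v (.atom p)
  | .box ts φ => v (.box ts φ)
  | .all x φ => v (.all x φ)

/-- Propositional tautologies. -/
def Taut {n : ℕ} {C Ap : Type} (φ : Form n C Ap) : Prop :=
  ∀ v : Form n C Ap → Prop, evalP v φ

/-- The axiom system of first-order coalition logic. -/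
inductive Deriv {n : ℕ} {C Ap : Type} : Form n C Ap → Prop
  | PC {φ} : Taut φ → Deriv φ
  | K (ts : Fin n → Tm C) (φ ψ) :
      Deriv (Form.iff (.and (.box ts φ) (.box ts ψ)) (.box ts (.and φ ψ)))
  | N (ts : Fin n → Tm C) (φ) :
      Deriv (Form.iff (.neg (.box ts φ)) (.box ts (.neg φ)))
  | E (x : ℕ) (t : Tm C) (φ) : Deriv (Form.imp (.all x φ) (Form.substT t x φ))
  | B (ts : Fin n → Tm C) (x : ℕ) (φ) (h : ∀ i, ts i ≠ Tm.var x) :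
      Deriv (Form.imp (.all x (.box ts φ)) (.box ts (.all x φ)))
  | MP {φ ψ} : Deriv (Form.imp φ ψ) → Deriv φ → Deriv ψ
  | Nec (ts : Fin n → Tm C) {φ} : Deriv φ → Deriv (.box ts φ)
  | Gen {φ ψ} (t : Tm C) (x : ℕ) :
      Deriv (Form.imp φ (Form.substT t x ψ)) → ¬ Form.occursT t φ →
      Deriv (Form.imp φ (.all x ψ))

/-- Derivability from a set of formulas. -/
def DerivFrom {n : ℕ} {C Ap : Type} (X : Set (Form n C Ap)) (φ : Form n C Ap) : Prop :=
  ∃ L : List (Form n C Ap), (∀ ψ ∈ L, ψ ∈ X) ∧ Deriv (L.foldr Form.imp φ)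

def Consistent {n : ℕ} {C Ap : Type} (X : Set (Form n C Ap)) : Prop :=
  ¬ ∃ φ, DerivFrom X φ ∧ DerivFrom X (.neg φ)

/-- A set of sentences. -/
def SentenceSet {n : ℕ} {C Ap : Type} (X : Set (Form n C Ap)) : Prop :=
  ∀ φ ∈ X, Form.closed φ

/-- Maximal consistent set (of sentences). -/
def MCS {n : ℕ} {C Ap : Type} (X : Set (Form n C Ap)) : Prop :=
  Consistent X ∧ ∀ ψ, Form.closed ψ → ψ ∉ X → ¬ Consistent (insert ψ X)

/-- The ∀-property. -/
def AllProp {n : ℕ} {C Ap : Type} (X : Set (Form n C Ap)) : Prop :=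
  ∀ (φ : Form n C Ap) (x : ℕ), Form.FV φ ⊆ {x} →
    ∃ a : C, Form.imp (Form.subst a x φ) (.all x φ) ∈ X

/-- The canonical model. -/
def canonical (n : ℕ) (C Ap : Type) : CGS n C Ap where
  S := {X : Set (Form n C Ap) // SentenceSet X ∧ MCS X ∧ AllProp X}
  R := fun X d Y => ∀ φ, φ ∈ Y.1 → Form.box (fun i => Tm.const (d i)) φ ∈ X.1
  V := fun p X => Form.atom p ∈ X.1

/-- Renaming of constants. -/
def Tm.mapC {C C' : Type} (f : C → C') : Tm C → Tm C'
  | .var x => .var x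
  | .const c => .const (f c)

def Form.mapC {n : ℕ} {C C' Ap : Type} (f : C → C') : Form n C Ap → Form n C' Ap
  | .atom p => .atom p
  | .neg φ => .neg (mapC f φ)
  | .and φ ψ => .and (mapC f φ) (mapC f ψ)
  | .box ts φ => .box (fun i => (ts i).mapC f) (mapC f φ)
  | .all y φ => .all y (mapC f φ)

/-! By axiom N, `⟨ā⟩` commutes with negation, i.e. the modality is functional. Hence
`{ψ | ⟨ā⟩ψ ∈ X}` is already maximal consistent, with no Lindenbaum construction, and for constant
actions the Barcan axiom B carries the ∀-property of `X` over to it. -/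

section Derivations

variable {n : ℕ} {C Ap : Type}

theorem evalP_foldr_imp (v : Form n C Ap → Prop) (L : List (Form n C Ap)) (χ : Form n C Ap) :
    evalP v (L.foldr Form.imp χ) ↔ (L.Forall (evalP v) → evalP v χ) := by
  induction L with
  | nil => simp
  | cons ψ L ih =>
    simp only [List.foldr_cons, Form.imp, evalP, ih, List.forall_cons]
    tauto

theorem Deriv.of_foldr_imp {χ : Form n C Ap} :
    ∀ {L : List (Form n C Ap)}, Deriv (L.foldr Form.imp χ) → L.Forall Deriv → Deriv χ
  | [], h, _ => h
  | _ :: _, h, hL =>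
    have ⟨hψ, hL⟩ := (List.forall_cons _ _ _).1 hL
    of_foldr_imp (h.MP hψ) hL

theorem Deriv.of_taut {χ : Form n C Ap} (L : List (Form n C Ap))
    (hχ : ∀ v, L.Forall (evalP v) → evalP v χ) (hL : L.Forall Deriv) : Deriv χ :=
  of_foldr_imp (PC fun v => (evalP_foldr_imp v L χ).2 (hχ v)) hL

variable {X : Set (Form n C Ap)} {φ ψ : Form n C Ap}

theorem DerivFrom.of_deriv (h : Deriv φ) : DerivFrom X φ :=
  ⟨[], by simp, h⟩

theorem DerivFrom.of_mem (h : φ ∈ X) : DerivFrom X φ :=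
  ⟨[φ], by simpa using h, .PC fun v => by simp [Form.imp, evalP]⟩

theorem DerivFrom.mp (hφψ : DerivFrom X (Form.imp φ ψ)) (hφ : DerivFrom X φ) :
    DerivFrom X ψ := by
  obtain ⟨L, hLX, hL⟩ := hφψ
  obtain ⟨M, hMX, hM⟩ := hφ
  refine ⟨L ++ M, by simpa [or_imp, forall_and] using And.intro hLX hMX,
    Deriv.of_taut [_, _] (fun v => ?_) ⟨hL, hM⟩⟩
  simp only [evalP_foldr_imp, List.forall_append, List.Forall, Form.imp, evalP]
  tauto

theorem DerivFrom.of_foldr_imp :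
    ∀ {L : List (Form n C Ap)}, DerivFrom X (L.foldr Form.imp φ) → L.Forall (DerivFrom X) →
      DerivFrom X φ
  | [], h, _ => h
  | _ :: _, h, hL =>
    have ⟨hψ, hL⟩ := (List.forall_cons _ _ _).1 hL
    of_foldr_imp (h.mp hψ) hL

theorem DerivFrom.of_taut (L : List (Form n C Ap))
    (hφ : ∀ v, L.Forall (evalP v) → evalP v φ) (hL : L.Forall (DerivFrom X)) :
    DerivFrom X φ :=
  of_foldr_imp (of_deriv (.PC fun v => (evalP_foldr_imp v L φ).2 (hφ v))) hL

theorem DerivFrom.imp_of_insert (h : DerivFrom (insert φ X) ψ) :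
    DerivFrom X (Form.imp φ ψ) := by
  classical
  obtain ⟨L, hLX, hL⟩ := h
  refine ⟨L.filter (· ∈ X), by simp, Deriv.of_taut [_] (fun v => ?_) hL⟩
  simp only [evalP_foldr_imp, List.Forall, List.forall_iff_forall_mem, List.mem_filter,
    decide_eq_true_eq, Form.imp, evalP, not_and, not_not]
  intro h hX hφ
  exact h fun χ hχ => (hLX χ hχ).elim (· ▸ hφ) (hX χ ⟨hχ, ·⟩)

end Derivations

namespace Form
variable {n : ℕ} {C Ap : Type}

theorem FV_substT_const_subset (a : C) (x : ℕ) (φ : Form n C Ap) :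
    FV (substT (.const a) x φ) ⊆ FV φ \ {x} := by
  induction φ with
  | atom => simp [substT, FV]
  | neg φ ih => exact ih
  | and φ ψ ih₁ ih₂ =>
    simp only [substT, FV, Finset.union_sdiff_distrib]
    exact Finset.union_subset_union ih₁ ih₂
  | box ts φ ih =>
    simp only [substT, FV, Finset.union_sdiff_distrib]
    refine Finset.union_subset_union ih fun y hy => ?_
    simp only [Finset.mem_biUnion, Finset.mem_univ, true_and] at hy
    obtain ⟨i, hi⟩ := hy
    split_ifs at hi with h
    · simp at hi
    · rcases hts : ts i with z | c <;> simp only [hts, Finset.mem_singleton, Tm.var.injEq] at hi h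
      · subst hi
        simpa using ⟨⟨i, by simp [hts]⟩, h⟩
      · simp at hi
  | all y φ ih =>
    by_cases hyx : y = x
    · subst hyx
      simp [substT, FV]
    · simp only [substT, if_neg hyx, FV]
      exact fun z hz => by grind

theorem FV_subset_FV_box (ts : Fin n → Tm C) (φ : Form n C Ap) : FV φ ⊆ FV (box ts φ) :=
  Finset.subset_union_left

theorem FV_box_const (d : Fin n → C) (φ : Form n C Ap) :
    FV (box (fun i => .const (d i)) φ) = FV φ := by
  simp [FV]

theorem subst_box_const (a : C) (x : ℕ) (d : Fin n → C) (φ : Form n C Ap) :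
    subst a x (box (fun i => .const (d i)) φ) = box (fun i => .const (d i)) (subst a x φ) := by
  simp [subst, substT]

theorem closed_box_const_iff (d : Fin n → C) (φ : Form n C Ap) :
    closed (box (fun i => .const (d i)) φ) ↔ closed φ := by
  rw [closed, FV_box_const, closed]

theorem closed_imp_subst_all {φ : Form n C Ap} {x : ℕ} (hφ : FV φ ⊆ {x}) (a : C) :
    closed (imp (subst a x φ) (all x φ)) := by
  have hx : FV φ \ {x} = ∅ := Finset.sdiff_eq_empty_iff_subset.2 hφ
  have hsubst : FV (subst a x φ) = ∅ :=
    Finset.subset_empty.1 (hx ▸ FV_substT_const_subset a x φ)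
  simp [closed, imp, FV, hx, hsubst]

end Form

section MaximalConsistent

variable {n : ℕ} {C Ap : Type} {X : Set (Form n C Ap)} {φ : Form n C Ap}

theorem MCS.derivFrom_neg_of_not_mem (hX : MCS X) (hφ : Form.closed φ) (h : φ ∉ X) :
    DerivFrom X (.neg φ) := by
  obtain ⟨χ, hχ, hnχ⟩ := not_not.1 (hX.2 φ hφ h)
  refine .of_taut [Form.imp φ χ, Form.imp φ (.neg χ)] (fun v => ?_)
    ⟨hχ.imp_of_insert, hnχ.imp_of_insert⟩
  simp only [List.Forall, Form.imp, evalP]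
  tauto

theorem MCS.mem_of_derivFrom (hX : MCS X) (hφ : Form.closed φ) (h : DerivFrom X φ) : φ ∈ X :=
  by_contra fun hnot => hX.1 ⟨φ, h, hX.derivFrom_neg_of_not_mem hφ hnot⟩

end MaximalConsistent

section Box

variable {n : ℕ} {C Ap : Type} {X : Set (Form n C Ap)} {ts : Fin n → Tm C} {φ ψ : Form n C Ap}

theorem DerivFrom.neg_box_iff :
    DerivFrom X (.neg (.box ts φ)) ↔ DerivFrom X (.box ts (.neg φ)) := by
  have hN := of_deriv (X := X) (Deriv.N ts φ)
  constructor <;> intro h <;> refine .of_taut [_, _] (fun v => ?_) ⟨hN, h⟩ <;>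
    simp only [List.Forall, Form.iff, Form.imp, evalP] <;> tauto

-- `⟨ā⟩(φ → ψ)` is `⟨ā⟩¬(φ ∧ ¬ψ)`, which N and K make equivalent to `⟨ā⟩φ → ⟨ā⟩ψ`.
theorem DerivFrom.box_mp (hφψ : DerivFrom X (.box ts (Form.imp φ ψ)))
    (hφ : DerivFrom X (.box ts φ)) : DerivFrom X (.box ts ψ) := by
  refine .of_taut [_, _, _, _, _] (fun v => ?_) ⟨hφψ, hφ,
    of_deriv (.N ts (.and φ (.neg ψ))), of_deriv (.K ts φ (.neg ψ)), of_deriv (.N ts ψ)⟩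
  simp only [List.Forall, Form.iff, Form.imp, evalP]
  tauto

theorem DerivFrom.box_imp (h : DerivFrom X (Form.imp (.box ts φ) (.box ts ψ))) :
    DerivFrom X (.box ts (Form.imp φ ψ)) := by
  refine .of_taut [_, _, _, _] (fun v => ?_) ⟨h,
    of_deriv (.N ts (.and φ (.neg ψ))), of_deriv (.K ts φ (.neg ψ)), of_deriv (.N ts ψ)⟩
  simp only [List.Forall, Form.iff, Form.imp, evalP]
  tauto

theorem DerivFrom.box_of_box_foldr_imp :
    ∀ {L : List (Form n C Ap)}, DerivFrom X (.box ts (L.foldr Form.imp φ)) →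
      (∀ ψ ∈ L, DerivFrom X (.box ts ψ)) → DerivFrom X (.box ts φ)
  | [], h, _ => h
  | ψ :: _, h, hL => box_of_box_foldr_imp (h.box_mp (hL ψ List.mem_cons_self))
      fun φ hφ => hL φ (List.mem_cons_of_mem ψ hφ)

theorem DerivFrom.box_of_preimage_box (h : DerivFrom (Form.box ts ⁻¹' X) φ) :
    DerivFrom X (.box ts φ) :=
  let ⟨_, hLX, hL⟩ := h
  box_of_box_foldr_imp (of_deriv (.Nec ts hL)) fun ψ hψ => of_mem (hLX ψ hψ)

theorem Consistent.preimage_box (hX : Consistent X) : Consistent (Form.box ts ⁻¹' X) :=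
  fun ⟨_, hφ, hnφ⟩ =>
    hX ⟨_, hφ.box_of_preimage_box, DerivFrom.neg_box_iff.2 hnφ.box_of_preimage_box⟩

theorem SentenceSet.preimage_box (hX : SentenceSet X) : SentenceSet (Form.box ts ⁻¹' X) :=
  fun φ hφ => Finset.subset_empty.1 ((Form.FV_subset_FV_box ts φ).trans (hX _ hφ).subset)

theorem MCS.preimage_box_const (hX : MCS X) (d : Fin n → C) :
    MCS (Form.box (fun i => .const (d i)) ⁻¹' X) := by
  refine ⟨hX.1.preimage_box, fun ψ hψ hnot hcons => hcons ⟨ψ, .of_mem (Set.mem_insert ψ _),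
    .of_mem (Set.mem_insert_of_mem ψ ?_)⟩⟩
  have hnegψ : DerivFrom X (.neg (.box (fun i => .const (d i)) ψ)) :=
    hX.derivFrom_neg_of_not_mem ((Form.closed_box_const_iff d ψ).2 hψ) hnot
  exact hX.mem_of_derivFrom ((Form.closed_box_const_iff d _).2 hψ) (DerivFrom.neg_box_iff.1 hnegψ)

theorem AllProp.preimage_box_const (hall : AllProp X) (hX : MCS X) (d : Fin n → C) :
    AllProp (Form.box (fun i => .const (d i)) ⁻¹' X) := by
  intro φ x hφ
  obtain ⟨a, ha⟩ := hall (.box (fun i => .const (d i)) φ) x (by rwa [Form.FV_box_const])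
  rw [Form.subst_box_const] at ha
  refine ⟨a, hX.mem_of_derivFrom ?_ (DerivFrom.box_imp ?_)⟩
  · exact (Form.closed_box_const_iff d _).2 (Form.closed_imp_subst_all hφ a)
  · refine .of_taut [_, _] (fun v => ?_)
      ⟨.of_mem ha, .of_deriv (.B (fun i => .const (d i)) x φ fun _ => by simp)⟩
    simp only [List.Forall, Form.imp, evalP]
    tauto

end Box

theorem existence_lemma_general {n : ℕ} {C Ap : Type}
    (X : Set (Form n C Ap)) (hX : SentenceSet X) (hmcs : MCS X) (hall : AllProp X)
    (d : Fin n → C) :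
    ∃ Y : Set (Form n C Ap), SentenceSet Y ∧ MCS Y ∧ AllProp Y ∧
      {ψ | Form.box (fun i => Tm.const (d i)) ψ ∈ X} ⊆ Y :=
  ⟨Form.box (fun i => .const (d i)) ⁻¹' X, hX.preimage_box, hmcs.preimage_box_const d, hall.preimage_box_const hmcs d, subset_rfl⟩

/-- existence lemma for ∀-MCSs. -/
theorem existence_lemma {n : ℕ} {C Ap : Type} [Infinite C] [Countable C]
    (X : Set (Form n C Ap)) (hX : SentenceSet X) (hmcs : MCS X) (hall : AllProp X)
    (d : Fin n → C) :
    ∃ Y : Set (Form n C Ap), SentenceSet Y ∧ MCS Y ∧ AllProp Y ∧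
      {ψ | Form.box (fun i => Tm.const (d i)) ψ ∈ X} ⊆ Y :=
  existence_lemma_general X hX hmcs hall d
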